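/- Let p > 3 be prime and let A = [[a,k],[p,d]] ∈ SL₂(ℤ) (so ad − kp = 1). For 0 ≤ r ≤ p−1, choose 0 ≤ r' ≤ p−1 with r' ≡ rd² + dk (mod p). Then T_r · A = B_r · T_{r'}, where T_j = [[1,j],[0,p]] and B_r = [[a+pr, (k + rd − r'(a+pr))/p],[p², d − r'p]]; moreover (k + rd − r'(a+pr)) is divisible by p so B_r is an integer matrix, B_r ∈ SL₂(ℤ) with lower-left entry p², and r ≡ r'a² − ak (mod p). -/
import Mathlib


/-- For `p > 3` prime and `A = [[a,k],[p,d]] ∈ SL₂(ℤ)`, with `0 ≤ r,r' ≤ p−1`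
and `r' ≡ rd² + dk (mod p)`: `T_r · A = B_r · T_{r'}` where
`B_r = [[a+pr, (k+rd−r'(a+pr))/p],[p², d−r'p]]` is an integer matrix of
determinant 1 with lower-left entry `p²`, and `r ≡ r'a² − ak (mod p)`. -/
theorem Br_decomposition (p : ℤ) (hp : Prime p) (hp3 : 3 < p)
    (a k d r r' : ℤ) (hdet : a * d - k * p = 1)
    (hr0 : 0 ≤ r) (hr1 : r ≤ p - 1) (hr'0 : 0 ≤ r') (hr'1 : r' ≤ p - 1)
    (hrr' : r' ≡ r * d ^ 2 + d * k [ZMOD p]) :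
    -- divisibility making B_r an integer matrix
    (p ∣ (k + r * d - r' * (a + p * r))) ∧
    -- T_r * A = B_r * T_{r'}
    ((!![1, r; 0, p] : Matrix (Fin 2) (Fin 2) ℤ) * !![a, k; p, d] =
      !![a + p * r, (k + r * d - r' * (a + p * r)) / p; p ^ 2, d - r' * p] *
        !![1, r'; 0, p]) ∧
    -- det B_r = 1
    ((a + p * r) * (d - r' * p)
        - ((k + r * d - r' * (a + p * r)) / p) * p ^ 2 = 1) ∧
    -- r ≡ r'a² − ak (mod p)
    (r ≡ r' * a ^ 2 - a * k [ZMOD p]) := by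
  obtain ⟨c, hc⟩ := (Int.modEq_iff_dvd.mp hrr')
  -- hc : r * d ^ 2 + d * k - r' = p * c
  have hD : k + r * d - r' * (a + p * r) =
      p * ((a + p * r) * c - (k + r * d) * k - r ^ 2 * d ^ 2 - r * d * k) := by
    linear_combination (a + p * r) * hc - (k + r * d) * hdet
  have hpdvd : p ∣ (k + r * d - r' * (a + p * r)) := ⟨_, hD⟩
  have hq : (k + r * d - r' * (a + p * r)) / p =
      (a + p * r) * c - (k + r * d) * k - r ^ 2 * d ^ 2 - r * d * k := by
    rw [hD]; exact Int.mul_ediv_cancel_left _ hp.ne_zero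
  refine ⟨hpdvd, ?_, ?_, ?_⟩
  · rw [hq]
    ext i j
    fin_cases i <;> fin_cases j <;>
      simp [Matrix.mul_apply, Fin.sum_univ_two] <;>
      first
        | ring1
        | linear_combination (a + p * r) * hc - (k + r * d) * hdet
  · rw [hq]
    linear_combination p * (a + p * r) * hc + (1 - p * (k + r * d)) * hdet
  · rw [Int.modEq_iff_dvd]
    refine ⟨-a ^ 2 * c + r * k * (a * d + 1) + a * k ^ 2, ?_⟩
    linear_combination (-a ^ 2) * hc + (r * (a * d + 1) + a * k) * hdet
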